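/- arXiv:hep-th/0606105 — 3 statements merged into one kernel-verified Lean document; each statement's English description precedes it below -/
import Mathlib

section
/- Let L be a Lie algebra over a field K which is ℤ-graded: L = ⊕_{ℓ∈ℤ} L_ℓ as K-vector spaces with ⁅L_ℓ, L_m⁆ ⊆ L_{ℓ+m}. Let θ : L → L be an involutive Lie algebra automorphism (θ∘θ = id) with θ(L_ℓ) = L_{−ℓ} for all ℓ, and for each integer ℓ ≥ 0 set k_ℓ := {x + θ(x) : x ∈ L_ℓ}. Then for all integers ℓ, m ≥ 0 one has ⁅k_ℓ, k_m⁆ ⊆ k_{ℓ+m} + k_{|ℓ−m|} (sum of subspaces inside L). In particular the fixed-point subalgebra of θ carries a filtered, but in general not graded, structure. -/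
/-- let `L = ⊕_{ℓ∈ℤ} L_ℓ` be a ℤ-graded Lie algebra over a field `K`, and let
`θ` be an involutive Lie algebra automorphism with `θ(L_ℓ) = L_{−ℓ}`. For `ℓ ≥ 0` set
`k_ℓ := {x + θ(x) : x ∈ L_ℓ}`. Then `⁅k_ℓ, k_m⁆ ⊆ k_{ℓ+m} + k_{|ℓ−m|}`: every bracket of an
element of `k_ℓ` with an element of `k_m` is a sum `p + q` with `p ∈ k_{ℓ+m}` and
`q ∈ k_{|ℓ−m|}`. -/
theorem stmt4 (K : Type*) [Field K] (L : Type*) [LieRing L] [LieAlgebra K L]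
    (Lg : ℤ → Submodule K L) (hdec : DirectSum.IsInternal Lg)
    (hgr : ∀ (ℓ m : ℤ) (x y : L), x ∈ Lg ℓ → y ∈ Lg m → ⁅x, y⁆ ∈ Lg (ℓ + m))
    (θ : L →ₗ⁅K⁆ L) (hinv : Function.Involutive θ)
    (hθ : ∀ ℓ : ℤ, Submodule.map (θ : L →ₗ[K] L) (Lg ℓ) = Lg (-ℓ)) :
    ∀ (ℓ m : ℕ) (u v : L),
      (∃ x ∈ Lg (ℓ : ℤ), u = x + θ x) → (∃ y ∈ Lg (m : ℤ), v = y + θ y) →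
      ∃ p q : L,
        (∃ x ∈ Lg ((ℓ : ℤ) + (m : ℤ)), p = x + θ x) ∧
        (∃ y ∈ Lg (|(ℓ : ℤ) - (m : ℤ)|), q = y + θ y) ∧
        ⁅u, v⁆ = p + q := by
  intro ℓ m u v ⟨x, hx, hu⟩ ⟨y, hy, hv⟩
  have hθx : θ x ∈ Lg (-(ℓ : ℤ)) := by
    rw [← hθ]; exact ⟨x, hx, rfl⟩
  have hθy : θ y ∈ Lg (-(m : ℤ)) := by
    rw [← hθ]; exact ⟨y, hy, rfl⟩
  have key : ⁅u, v⁆ = (⁅x, y⁆ + θ ⁅x, y⁆) + (⁅x, θ y⁆ + ⁅θ x, y⁆) := by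
    subst hu hv
    rw [lie_add, add_lie, add_lie, LieHom.map_lie]
    abel
  refine ⟨⁅x, y⁆ + θ ⁅x, y⁆, ⁅x, θ y⁆ + ⁅θ x, y⁆,
    ⟨⁅x, y⁆, hgr _ _ _ _ hx hy, rfl⟩, ?_, key⟩
  rcases le_total (m : ℤ) (ℓ : ℤ) with h | h
  · refine ⟨⁅x, θ y⁆, ?_, ?_⟩
    · have := hgr _ _ _ _ hx hθy
      rwa [abs_of_nonneg (by linarith)]
    · rw [LieHom.map_lie, hinv y]
  · refine ⟨⁅θ x, y⁆, ?_, ?_⟩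
    · have := hgr _ _ _ _ hθx hy
      rwa [abs_of_nonpos (by linarith), neg_sub, show (m : ℤ) - ℓ = -ℓ + m by ring]
    · rw [LieHom.map_lie, hinv x, add_comm]
end

section
/- Let n ≥ 4 and let p, q, r, s ∈ {1,…,n} be pairwise distinct. In Cl(n), set x := (1/2)·e_q e_r e_s and y := (1/2)·e_p e_q. Then ⁅x, ⁅x, y⁆⁆ + y = 0. (This is the Serre-like consistency relation for the unfaithful Dirac-spinor representation of K(E₁₀); note that it holds for every dimension n.) -/
/-- The standard positive-definite quadratic form on `ℝⁿ`. -/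
noncomputable def stdQuadraticForm (n : ℕ) : QuadraticForm ℝ (Fin n → ℝ) :=
  QuadraticMap.weightedSumSquares ℝ (fun _ : Fin n => (1 : ℝ))

/-- The Clifford algebra `Cl(n)` of the standard positive-definite quadratic form on `ℝⁿ`. -/
abbrev Cl (n : ℕ) := CliffordAlgebra (stdQuadraticForm n)

/-- The generators `e₁, …, eₙ` of `Cl(n)`. -/
noncomputable def ee {n : ℕ} (a : Fin n) : Cl n :=
  CliffordAlgebra.ι (stdQuadraticForm n) (Pi.single a 1)

lemma ee_sq {n : ℕ} (a : Fin n) : ee a * ee a = 1 := by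
  rw [ee, CliffordAlgebra.ι_sq_scalar]
  have : stdQuadraticForm n (Pi.single a 1) = 1 := by
    simp [stdQuadraticForm, QuadraticMap.weightedSumSquares_apply, Pi.single_apply]
  rw [this, map_one]

lemma ee_swap {n : ℕ} {a b : Fin n} (h : a ≠ b) : ee a * ee b = -(ee b * ee a) := by
  have := CliffordAlgebra.ι_mul_ι_add_swap (Q := stdQuadraticForm n)
    (Pi.single a 1) (Pi.single b 1)
  have hp : QuadraticMap.polar (stdQuadraticForm n) (Pi.single a 1) (Pi.single b 1) = 0 := by
    simp [QuadraticMap.polar, stdQuadraticForm, QuadraticMap.weightedSumSquares_apply,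
      Pi.single_apply]
    have hx : ∀ x : Fin n, ((if x = a then (1:ℝ) else 0) + if x = b then 1 else 0) *
        ((if x = a then (1:ℝ) else 0) + if x = b then 1 else 0) =
        (if x = a then 1 else 0) + (if x = b then 1 else 0) := by
      intro x
      by_cases h1 : x = a <;> by_cases h2 : x = b <;>
        first
        | (exfalso; exact h (h1 ▸ h2 ▸ rfl))
        | simp [h1, h2, h, h.symm]
    rw [Finset.sum_congr rfl (fun x _ => hx x)]
    simp [Finset.sum_add_distrib]
  rw [hp, map_zero] at this
  rw [ee, ee]
  exact eq_neg_of_add_eq_zero_left this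

lemma key {R : Type*} [Ring R] (A B C D : R)
    (hB : B*B = 1) (hC : C*C = 1) (hD : D*D = 1)
    (hBA : B*A = -(A*B)) (hCA : C*A = -(A*C)) (hDA : D*A = -(A*D))
    (hCB : C*B = -(B*C)) (hDB : D*B = -(B*D)) (hDC : D*C = -(C*D)) :
    (B*C*D)*((B*C*D)*(A*B) - (A*B)*(B*C*D)) - ((B*C*D)*(A*B) - (A*B)*(B*C*D))*(B*C*D)
      = -(A*B + A*B + A*B + A*B) := by
  have hB' : ∀ x : R, B*(B*x) = x := fun x => by rw [← mul_assoc, hB, one_mul]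
  have hC' : ∀ x : R, C*(C*x) = x := fun x => by rw [← mul_assoc, hC, one_mul]
  have hD' : ∀ x : R, D*(D*x) = x := fun x => by rw [← mul_assoc, hD, one_mul]
  have hBA' : ∀ x : R, B*(A*x) = -(A*(B*x)) := fun x => by
    rw [← mul_assoc, hBA, neg_mul, mul_assoc]
  have hCA' : ∀ x : R, C*(A*x) = -(A*(C*x)) := fun x => by
    rw [← mul_assoc, hCA, neg_mul, mul_assoc]
  have hDA' : ∀ x : R, D*(A*x) = -(A*(D*x)) := fun x => by
    rw [← mul_assoc, hDA, neg_mul, mul_assoc]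
  have hCB' : ∀ x : R, C*(B*x) = -(B*(C*x)) := fun x => by
    rw [← mul_assoc, hCB, neg_mul, mul_assoc]
  have hDB' : ∀ x : R, D*(B*x) = -(B*(D*x)) := fun x => by
    rw [← mul_assoc, hDB, neg_mul, mul_assoc]
  have hDC' : ∀ x : R, D*(C*x) = -(C*(D*x)) := fun x => by
    rw [← mul_assoc, hDC, neg_mul, mul_assoc]
  simp only [mul_sub, sub_mul, mul_assoc, hB', hC', hD', hBA', hCA', hDA', hCB', hDB', hDC',
    mul_neg, neg_neg, neg_mul, hB, hC, hD, hBA, hCA, hDA, hCB, hDB, hDC, mul_one, one_mul]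
  abel

/-- the Serre-like consistency relation
`⁅x, ⁅x, y⁆⁆ + y = 0` in `Cl(n)` for `x = (1/2)·e_q e_r e_s` and `y = (1/2)·e_p e_q`,
with `p, q, r, s` pairwise distinct. -/
theorem stmt6 (n : ℕ) (hn : 4 ≤ n) (p q r s : Fin n)
    (hpq : p ≠ q) (hpr : p ≠ r) (hps : p ≠ s)
    (hqr : q ≠ r) (hqs : q ≠ s) (hrs : r ≠ s) :
    ⁅((1 : ℝ)/2) • (ee q * ee r * ee s),
      ⁅((1 : ℝ)/2) • (ee q * ee r * ee s), ((1 : ℝ)/2) • (ee p * ee q)⁆⁆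
      + ((1 : ℝ)/2) • (ee p * ee q) = 0 := by
  have hkey := key (ee p) (ee q) (ee r) (ee s) (ee_sq q) (ee_sq r) (ee_sq s)
    (ee_swap hpq.symm) (ee_swap hpr.symm) (ee_swap hps.symm)
    (ee_swap hqr.symm) (ee_swap hqs.symm) (ee_swap hrs.symm)
  set U := ee q * ee r * ee s with hU
  set V := ee p * ee q with hV
  rw [mul_sub, sub_mul] at hkey
  simp only [Ring.lie_def, mul_sub, sub_mul, mul_smul_comm, smul_mul_assoc, smul_sub, smul_smul]
  linear_combination (norm := module) ((1:ℝ)/8) • hkey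
end

section
/- Take Δ = 10. Let M be a module over Cl(10) and let B : M × M → ℝ be a symmetric bilinear form satisfying B(eₐ·u, v) = B(u, eₐ·v) for all a ∈ {1,…,10} and u, v ∈ M. Define a bilinear form on the vector-spinor space V by (Ψ|Φ) := Σ_{a ≠ b} B(Ψ_a, e_a e_b·Φ_b), where the sum runs over all ordered pairs of distinct indices a, b ∈ {1,…,10}. Then this form is invariant under the K(E₁₀) actions: for all pairwise distinct a, b one has (T^{ab}Ψ|Φ) + (Ψ|T^{ab}Φ) = 0, and for all pairwise distinct a, b, c one has (S^{abc}Ψ|Φ) + (Ψ|S^{abc}Φ) = 0, for all Ψ, Φ ∈ V. (The invariance under the level-one operators S^{abc} is special to dimension Δ = 10.) -/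
section VectorSpinor

variable {Δ : ℕ} {M : Type*} [AddCommGroup M] [Module (Cl Δ) M]

/-- `Γ_d^{xy} := e_d e_x e_y` if `d ∉ {x,y}` and `0` otherwise. -/
noncomputable def Gam3 (d x y : Fin Δ) : Cl Δ :=
  if d = x ∨ d = y then 0 else ee d * ee x * ee y

/-- The level-0 `K(E₁₀)` action on vector-spinors:
`(T^{ab}Ψ)_c := (1/2)·eₐe_b·Ψ_c + δ_c^a·Ψ_b − δ_c^b·Ψ_a`. -/
noncomputable def Tlev (a b : Fin Δ) (Ψ : Fin Δ → M) : Fin Δ → M := fun c =>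
  (((1 : ℝ)/2) • (ee a * ee b)) • Ψ c
    + (if c = a then Ψ b else 0) - (if c = b then Ψ a else 0)

/-- The level-1 `K(E₁₀)` action on vector-spinors:
`(S^{abc}Ψ)_d := (1/2)·eₐe_be_c·Ψ_d
  + (2/3)·(δ_d^a·(e_b·Ψ_c − e_c·Ψ_b) + δ_d^b·(e_c·Ψ_a − e_a·Ψ_c) + δ_d^c·(e_a·Ψ_b − e_b·Ψ_a))
  − (1/3)·(Γ_d^{ab}·Ψ_c + Γ_d^{bc}·Ψ_a + Γ_d^{ca}·Ψ_b)`. -/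
noncomputable def Sop (a b c : Fin Δ) (Ψ : Fin Δ → M) : Fin Δ → M := fun d =>
  (((1 : ℝ)/2) • (ee a * ee b * ee c)) • Ψ d
    + (if d = a then (((2 : ℝ)/3) • ee b) • Ψ c - (((2 : ℝ)/3) • ee c) • Ψ b else 0)
    + (if d = b then (((2 : ℝ)/3) • ee c) • Ψ a - (((2 : ℝ)/3) • ee a) • Ψ c else 0)
    + (if d = c then (((2 : ℝ)/3) • ee a) • Ψ b - (((2 : ℝ)/3) • ee b) • Ψ a else 0)
    - ((((1 : ℝ)/3) • Gam3 d a b) • Ψ c + (((1 : ℝ)/3) • Gam3 d b c) • Ψ a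
        + (((1 : ℝ)/3) • Gam3 d c a) • Ψ b)

/-- The commutator of two operators on the space of vector-spinors. -/
def opComm (A B : (Fin Δ → M) → (Fin Δ → M)) : (Fin Δ → M) → (Fin Δ → M) :=
  fun Ψ => A (B Ψ) - B (A Ψ)


end VectorSpinor

/-- The bilinear form `(Ψ|Φ) := Σ_{a ≠ b} B(Ψ_a, e_a e_b·Φ_b)` on vector-spinors
in dimension `Δ = 10`. -/
noncomputable def vsForm {M : Type*} [AddCommGroup M] [Module ℝ M] [Module (Cl 10) M]
    [IsScalarTower ℝ (Cl 10) M] (B : M →ₗ[ℝ] M →ₗ[ℝ] ℝ)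
    (Ψ Φ : Fin 10 → M) : ℝ :=
  ∑ a : Fin 10, ∑ b : Fin 10, if a = b then 0 else B (Ψ a) ((ee a * ee b) • Φ b)

set_option maxHeartbeats 1000000
set_option linter.unusedSectionVars false

section Mod

variable {M : Type*} [AddCommGroup M] [Module ℝ M] [Module (Cl 10) M]
    [IsScalarTower ℝ (Cl 10) M]

lemma sm_sq (a : Fin 10) (m : M) : ee a • ee a • m = m := by
  rw [← mul_smul, ee_sq, one_smul]

lemma sm_swap {x y : Fin 10} (h : x ≠ y) (m : M) :
    ee y • ee x • m = -(ee x • ee y • m) := by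
  rw [← mul_smul, ee_swap h.symm, neg_smul, mul_smul]

lemma ite_zero_ite (P Q : Prop) [Decidable P] [Decidable Q] (x : ℝ) :
    (if P then 0 else if Q then x else 0) = if Q then (if P then 0 else x) else 0 := by
  split_ifs <;> rfl

variable (B : M →ₗ[ℝ] M →ₗ[ℝ] ℝ)

lemma B_ite_l (P : Prop) [Decidable P] (x w : M) :
    B (if P then x else 0) w = if P then B x w else 0 := by
  split_ifs <;> simp

lemma B_ite_r (P : Prop) [Decidable P] (x w : M) :
    B w (if P then x else 0) = if P then B w x else 0 := by
  split_ifs <;> simp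

lemma smul_ite0 (P : Prop) [Decidable P] (y : Cl 10) (x : M) :
    y • (if P then x else (0:M)) = if P then y • x else 0 := by
  split_ifs <;> simp

lemma vsForm_single_right (Ψ : Fin 10 → M) (q : Fin 10) (v : M) :
    vsForm B Ψ (Pi.single q v) = ∑ c, if c = q then 0 else B (Ψ c) ((ee c * ee q) • v) := by
  unfold vsForm
  refine Finset.sum_congr rfl (fun c _ => ?_)
  rw [Finset.sum_eq_single q]
  · rw [Pi.single_eq_same]
  · intro d _ hd
    rw [Pi.single_eq_of_ne hd, smul_zero, map_zero, ite_self]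
  · simp
lemma vsForm_single_left (Φ : Fin 10 → M) (p : Fin 10) (u : M) :
    vsForm B (Pi.single p u) Φ = ∑ d, if p = d then 0 else B u ((ee p * ee d) • Φ d) := by
  unfold vsForm
  rw [Finset.sum_eq_single p]
  · rw [Pi.single_eq_same]
  · intro c _ hc
    refine Finset.sum_eq_zero (fun d _ => ?_)
    rw [Pi.single_eq_of_ne hc, map_zero, LinearMap.zero_apply, ite_self]
  · simp

end Mod

lemma itez_addsub (P : Prop) [Decidable P] (x y z : ℝ) :
    (if P then 0 else (x + y - z)) = (if P then 0 else x) + (if P then 0 else y) - (if P then 0 else z) := by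
  split_ifs <;> simp

section Mod2
variable {M : Type*} [AddCommGroup M] [Module ℝ M] [Module (Cl 10) M]
    [IsScalarTower ℝ (Cl 10) M]

lemma sm_real (x : Fin 10) (r : ℝ) (m : M) : ee x • r • m = r • ee x • m := by
  rw [← algebraMap_smul (Cl 10) r m, ← mul_smul, ← Algebra.commutes, mul_smul, algebraMap_smul]

end Mod2
section Core
variable {M : Type*} [AddCommGroup M] [Module ℝ M] [Module (Cl 10) M]
    [IsScalarTower ℝ (Cl 10) M] {B : M →ₗ[ℝ] M →ₗ[ℝ] ℝ}
    (hadj : ∀ (a : Fin 10) (u v : M), B (ee a • u) v = B u (ee a • v))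

include hadj in
lemma coreT (a b p q : Fin 10) (hab : a ≠ b) (u v : M) :
    vsForm B (Tlev a b (Pi.single p u)) (Pi.single q v)
      + vsForm B (Pi.single p u) (Tlev a b (Pi.single q v)) = 0 := by
  rw [vsForm_single_right, vsForm_single_left]
  simp only [Tlev, Pi.single_apply, smul_ite0, smul_zero, smul_add, smul_sub,
    map_add, map_sub, map_zero, LinearMap.add_apply, LinearMap.sub_apply, LinearMap.zero_apply,
    B_ite_l, B_ite_r, itez_addsub, ite_zero_ite, Finset.sum_add_distrib,
    Finset.sum_sub_distrib, Finset.sum_ite_eq', Finset.mem_univ, if_true]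
  by_cases hpa : p = a
  · by_cases hqa : q = a
    · -- p = a, q = a
      simp [hpa, hqa, hab, Ne.symm hab, sm_real, smul_assoc, map_smul, mul_smul, hadj, sm_sq,
        sm_swap hab, smul_neg, map_neg, neg_neg]
      try ring_nf
    · by_cases hqb : q = b
      · -- p = a, q = b
        simp [hpa, hqb, hab, Ne.symm hab, sm_real, smul_assoc, map_smul, mul_smul, hadj, sm_sq,
          sm_swap hab, smul_neg, map_neg, neg_neg]
        try ring_nf
      · -- p = a, q generic
        simp [hpa, hqa, hqb, Ne.symm hqa, Ne.symm hqb, hab, Ne.symm hab, sm_real, smul_assoc,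
          map_smul, mul_smul, hadj, sm_sq, sm_swap hab, sm_swap (Ne.symm hqa),
          sm_swap (Ne.symm hqb), smul_neg, map_neg, neg_neg]
        try ring_nf
  · by_cases hpb : p = b
    · by_cases hqa : q = a
      · -- p = b, q = a
        simp [hpb, hqa, hab, Ne.symm hab, sm_real, smul_assoc, map_smul, mul_smul, hadj, sm_sq,
          sm_swap hab, smul_neg, map_neg, neg_neg]
        try ring_nf
      · by_cases hqb : q = b
        · -- p = b, q = b
          simp [hpb, hqb, hab, Ne.symm hab, sm_real, smul_assoc, map_smul, mul_smul, hadj, sm_sq,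
            sm_swap hab, smul_neg, map_neg, neg_neg]
          try ring_nf
        · -- p = b, q generic
          simp [hpb, hqa, hqb, Ne.symm hqa, Ne.symm hqb, hab, Ne.symm hab, sm_real, smul_assoc,
            map_smul, mul_smul, hadj, sm_sq, sm_swap hab, sm_swap (Ne.symm hqa),
            sm_swap (Ne.symm hqb), smul_neg, map_neg, neg_neg]
          try ring_nf
    · by_cases hqa : q = a
      · -- p generic, q = a
        simp [hqa, hpa, hpb, Ne.symm hpa, Ne.symm hpb, hab, Ne.symm hab, sm_real, smul_assoc,
          map_smul, mul_smul, hadj, sm_sq, sm_swap hab, sm_swap (Ne.symm hpa),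
          sm_swap (Ne.symm hpb), smul_neg, map_neg, neg_neg]
        try ring_nf
      · by_cases hqb : q = b
        · -- p generic, q = b
          simp [hqb, hpa, hpb, Ne.symm hpa, Ne.symm hpb, hab, Ne.symm hab, sm_real, smul_assoc,
            map_smul, mul_smul, hadj, sm_sq, sm_swap hab, sm_swap (Ne.symm hpa),
            sm_swap (Ne.symm hpb), smul_neg, map_neg, neg_neg]
          try ring_nf
        · by_cases hpq : p = q
          · -- p = q generic
            simp [hpq, hqa, hqb, Ne.symm hqa, Ne.symm hqb]
          · -- all distinct
            simp [hpa, hpb, hqa, hqb, hpq, Ne.symm hpa, Ne.symm hpb, Ne.symm hqa, Ne.symm hqb,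
              Ne.symm hpq, hab, Ne.symm hab, sm_real, smul_assoc, map_smul, mul_smul, hadj, sm_sq,
              sm_swap hab, sm_swap (Ne.symm hpa), sm_swap (Ne.symm hpb), sm_swap (Ne.symm hqa),
              sm_swap (Ne.symm hqb), sm_swap hpq, smul_neg, map_neg, neg_neg]
            try ring_nf
end Core
lemma ite_zero_or (P Q : Prop) [Decidable P] [Decidable Q] (x : ℝ) :
    (if P then 0 else if Q then 0 else x) = if P ∨ Q then 0 else x := by
  split_ifs with h1 h2 h3 h3 <;> tauto

lemma sum_ite_push (P : Prop) [Decidable P] (f : Fin 10 → ℝ) :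
    (∑ x : Fin 10, if P then f x else 0) = if P then ∑ x : Fin 10, f x else 0 := by
  split_ifs <;> simp

lemma card_filter3 (q a b : Fin 10) (hab : a ≠ b) :
    (Finset.univ.filter (fun x : Fin 10 => ¬(x = q ∨ x = a ∨ x = b))).card
      = if q = a ∨ q = b then 8 else 7 := by
  have : Finset.univ.filter (fun x : Fin 10 => ¬(x = q ∨ x = a ∨ x = b))
      = Finset.univ \ {q, a, b} := by
    ext x
    simp [not_or]
  rw [this, Finset.card_sdiff_of_subset (Finset.subset_univ _)]
  by_cases h : q = a ∨ q = b
  · rw [if_pos h]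
    rcases h with h | h
    · subst h
      rw [Finset.insert_idem, Finset.card_insert_of_notMem (by simp [hab]),
        Finset.card_singleton]
      rfl
    · subst h
      have : ({q, a, q} : Finset (Fin 10)) = {q, a} := by
        ext x; simp; tauto
      rw [this, Finset.card_insert_of_notMem (by simp [Ne.symm hab]), Finset.card_singleton]
      rfl
  · rw [if_neg h]
    push_neg at h
    rw [Finset.card_insert_of_notMem (by simp [h.1, h.2]),
      Finset.card_insert_of_notMem (by simp [hab]), Finset.card_singleton]
    rfl

lemma sum_ite3 (q a b : Fin 10) (hab : a ≠ b) (C : ℝ) :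
    (∑ x : Fin 10, if x = q ∨ x = a ∨ x = b then 0 else C)
      = (if q = a ∨ q = b then 8 else 7) * C := by
  rw [Finset.sum_ite, Finset.sum_const_zero, Finset.sum_const, zero_add, nsmul_eq_mul,
    card_filter3 q a b hab]
  split_ifs <;> norm_num

lemma sum_ite3' (q a b : Fin 10) (hab : a ≠ b) (C : ℝ) :
    (∑ x : Fin 10, if q = x ∨ x = a ∨ x = b then 0 else C)
      = (if q = a ∨ q = b then 8 else 7) * C := by
  rw [← sum_ite3 q a b hab C]
  refine Finset.sum_congr rfl (fun x _ => ?_)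
  have : (q = x ∨ x = a ∨ x = b) ↔ (x = q ∨ x = a ∨ x = b) := by
    constructor <;> (rintro (h | h) <;> [exact Or.inl h.symm; exact Or.inr h])
  simp only [this]

lemma itez_add (P : Prop) [Decidable P] (x y : ℝ) :
    (if P then 0 else (x + y)) = (if P then 0 else x) + (if P then 0 else y) := by
  split_ifs <;> simp

lemma itez_sub (P : Prop) [Decidable P] (x y : ℝ) :
    (if P then 0 else (x - y)) = (if P then 0 else x) - (if P then 0 else y) := by
  split_ifs <;> simp

section Mod3
variable {M : Type*} [AddCommGroup M] [Module ℝ M] [Module (Cl 10) M]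
    [IsScalarTower ℝ (Cl 10) M] (B : M →ₗ[ℝ] M →ₗ[ℝ] ℝ)

lemma B_ite_l' (P : Prop) [Decidable P] (x w : M) :
    B (if P then 0 else x) w = if P then 0 else B x w := by
  split_ifs <;> simp

lemma B_ite_r' (P : Prop) [Decidable P] (x w : M) :
    B w (if P then 0 else x) = if P then 0 else B w x := by
  split_ifs <;> simp

end Mod3

section CoreS
variable {M : Type*} [AddCommGroup M] [Module ℝ M] [Module (Cl 10) M]
    [IsScalarTower ℝ (Cl 10) M] {B : M →ₗ[ℝ] M →ₗ[ℝ] ℝ}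
    (hadj : ∀ (a : Fin 10) (u v : M), B (ee a • u) v = B u (ee a • v))

include hadj in
lemma coreS (a b c p q : Fin 10) (hab : a ≠ b) (hac : a ≠ c) (hbc : b ≠ c) (u v : M) :
    vsForm B (Sop a b c (Pi.single p u)) (Pi.single q v)
      + vsForm B (Pi.single p u) (Sop a b c (Pi.single q v)) = 0 := by
  rw [vsForm_single_right, vsForm_single_left]
  simp only [Sop, Gam3, Pi.single_apply, smul_ite0, smul_zero, smul_add, smul_sub, smul_ite,
    ite_smul, zero_smul, smul_neg, map_add, map_sub, map_neg, map_zero, LinearMap.add_apply,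
    LinearMap.sub_apply, LinearMap.neg_apply, LinearMap.zero_apply, B_ite_l, B_ite_r,
    B_ite_l', B_ite_r',
    smul_assoc, map_smul, LinearMap.smul_apply, smul_eq_mul, mul_smul, hadj, sm_sq, sm_real,
    itez_add, itez_sub, itez_addsub, ite_zero_ite, ite_zero_or,
    Finset.sum_add_distrib, Finset.sum_sub_distrib, sum_ite_push,
    Finset.sum_ite_eq', Finset.mem_univ, if_true,
    sum_ite3 (hab := hab), sum_ite3 (hab := hbc), sum_ite3 (hab := hac.symm),
    sum_ite3' (hab := hab), sum_ite3' (hab := hbc), sum_ite3' (hab := hac.symm)]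
  by_cases hpa : p = a
  · by_cases hqa : q = a
    · simp [hpa, hqa, sm_real, smul_assoc, map_smul, mul_smul, hadj, sm_sq, smul_neg, map_neg, neg_neg, sm_swap hab, sm_swap hac, sm_swap hbc, hab, hac, hbc, Ne.symm hab, Ne.symm hac, Ne.symm hbc]
      try ring_nf
    · by_cases hqb : q = b
      · simp [hpa, hqb, sm_real, smul_assoc, map_smul, mul_smul, hadj, sm_sq, smul_neg, map_neg, neg_neg, sm_swap hab, sm_swap hac, sm_swap hbc, hab, hac, hbc, Ne.symm hab, Ne.symm hac, Ne.symm hbc]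
        try ring_nf
      · by_cases hqc : q = c
        · simp [hpa, hqc, sm_real, smul_assoc, map_smul, mul_smul, hadj, sm_sq, smul_neg, map_neg, neg_neg, sm_swap hab, sm_swap hac, sm_swap hbc, hab, hac, hbc, Ne.symm hab, Ne.symm hac, Ne.symm hbc]
          try ring_nf
        · simp [hpa, hqa, hqb, hqc, Ne.symm hqa, Ne.symm hqb, Ne.symm hqc, sm_swap (Ne.symm hqa), sm_swap (Ne.symm hqb), sm_swap (Ne.symm hqc), sm_real, smul_assoc, map_smul, mul_smul, hadj, sm_sq, smul_neg, map_neg, neg_neg, sm_swap hab, sm_swap hac, sm_swap hbc, hab, hac, hbc, Ne.symm hab, Ne.symm hac, Ne.symm hbc]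
          try ring_nf
  · by_cases hpb : p = b
    · by_cases hqa : q = a
      · simp [hpb, hqa, sm_real, smul_assoc, map_smul, mul_smul, hadj, sm_sq, smul_neg, map_neg, neg_neg, sm_swap hab, sm_swap hac, sm_swap hbc, hab, hac, hbc, Ne.symm hab, Ne.symm hac, Ne.symm hbc]
        try ring_nf
      · by_cases hqb : q = b
        · simp [hpb, hqb, sm_real, smul_assoc, map_smul, mul_smul, hadj, sm_sq, smul_neg, map_neg, neg_neg, sm_swap hab, sm_swap hac, sm_swap hbc, hab, hac, hbc, Ne.symm hab, Ne.symm hac, Ne.symm hbc]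
          try ring_nf
        · by_cases hqc : q = c
          · simp [hpb, hqc, sm_real, smul_assoc, map_smul, mul_smul, hadj, sm_sq, smul_neg, map_neg, neg_neg, sm_swap hab, sm_swap hac, sm_swap hbc, hab, hac, hbc, Ne.symm hab, Ne.symm hac, Ne.symm hbc]
            try ring_nf
          · simp [hpb, hqa, hqb, hqc, Ne.symm hqa, Ne.symm hqb, Ne.symm hqc, sm_swap (Ne.symm hqa), sm_swap (Ne.symm hqb), sm_swap (Ne.symm hqc), sm_real, smul_assoc, map_smul, mul_smul, hadj, sm_sq, smul_neg, map_neg, neg_neg, sm_swap hab, sm_swap hac, sm_swap hbc, hab, hac, hbc, Ne.symm hab, Ne.symm hac, Ne.symm hbc]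
            try ring_nf
    · by_cases hpc : p = c
      · by_cases hqa : q = a
        · simp [hpc, hqa, sm_real, smul_assoc, map_smul, mul_smul, hadj, sm_sq, smul_neg, map_neg, neg_neg, sm_swap hab, sm_swap hac, sm_swap hbc, hab, hac, hbc, Ne.symm hab, Ne.symm hac, Ne.symm hbc]
          try ring_nf
        · by_cases hqb : q = b
          · simp [hpc, hqb, sm_real, smul_assoc, map_smul, mul_smul, hadj, sm_sq, smul_neg, map_neg, neg_neg, sm_swap hab, sm_swap hac, sm_swap hbc, hab, hac, hbc, Ne.symm hab, Ne.symm hac, Ne.symm hbc]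
            try ring_nf
          · by_cases hqc : q = c
            · simp [hpc, hqc, sm_real, smul_assoc, map_smul, mul_smul, hadj, sm_sq, smul_neg, map_neg, neg_neg, sm_swap hab, sm_swap hac, sm_swap hbc, hab, hac, hbc, Ne.symm hab, Ne.symm hac, Ne.symm hbc]
              try ring_nf
            · simp [hpc, hqa, hqb, hqc, Ne.symm hqa, Ne.symm hqb, Ne.symm hqc, sm_swap (Ne.symm hqa), sm_swap (Ne.symm hqb), sm_swap (Ne.symm hqc), sm_real, smul_assoc, map_smul, mul_smul, hadj, sm_sq, smul_neg, map_neg, neg_neg, sm_swap hab, sm_swap hac, sm_swap hbc, hab, hac, hbc, Ne.symm hab, Ne.symm hac, Ne.symm hbc]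
              try ring_nf
      · by_cases hqa : q = a
        · simp [hpa, hpb, hpc, Ne.symm hpa, Ne.symm hpb, Ne.symm hpc, hqa, sm_swap (Ne.symm hpa), sm_swap (Ne.symm hpb), sm_swap (Ne.symm hpc), sm_real, smul_assoc, map_smul, mul_smul, hadj, sm_sq, smul_neg, map_neg, neg_neg, sm_swap hab, sm_swap hac, sm_swap hbc, hab, hac, hbc, Ne.symm hab, Ne.symm hac, Ne.symm hbc]
          try ring_nf
        · by_cases hqb : q = b
          · simp [hpa, hpb, hpc, Ne.symm hpa, Ne.symm hpb, Ne.symm hpc, hqb, sm_swap (Ne.symm hpa), sm_swap (Ne.symm hpb), sm_swap (Ne.symm hpc), sm_real, smul_assoc, map_smul, mul_smul, hadj, sm_sq, smul_neg, map_neg, neg_neg, sm_swap hab, sm_swap hac, sm_swap hbc, hab, hac, hbc, Ne.symm hab, Ne.symm hac, Ne.symm hbc]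
            try ring_nf
          · by_cases hqc : q = c
            · simp [hpa, hpb, hpc, Ne.symm hpa, Ne.symm hpb, Ne.symm hpc, hqc, sm_swap (Ne.symm hpa), sm_swap (Ne.symm hpb), sm_swap (Ne.symm hpc), sm_real, smul_assoc, map_smul, mul_smul, hadj, sm_sq, smul_neg, map_neg, neg_neg, sm_swap hab, sm_swap hac, sm_swap hbc, hab, hac, hbc, Ne.symm hab, Ne.symm hac, Ne.symm hbc]
              try ring_nf
            · by_cases hpq : p = q
              · simp [hpa, hpb, hpc, Ne.symm hpa, Ne.symm hpb, Ne.symm hpc, hqa, hqb, hqc, Ne.symm hqa, Ne.symm hqb, Ne.symm hqc, hpq, sm_swap (Ne.symm hpa), sm_swap (Ne.symm hpb), sm_swap (Ne.symm hpc), sm_swap (Ne.symm hqa), sm_swap (Ne.symm hqb), sm_swap (Ne.symm hqc), sm_real, smul_assoc, map_smul, mul_smul, hadj, sm_sq, smul_neg, map_neg, neg_neg, sm_swap hab, sm_swap hac, sm_swap hbc, hab, hac, hbc, Ne.symm hab, Ne.symm hac, Ne.symm hbc]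
                try ring_nf
              · simp [hpa, hpb, hpc, Ne.symm hpa, Ne.symm hpb, Ne.symm hpc, hqa, hqb, hqc, Ne.symm hqa, Ne.symm hqb, Ne.symm hqc, hpq, Ne.symm hpq, sm_swap (Ne.symm hpa), sm_swap (Ne.symm hpb), sm_swap (Ne.symm hpc), sm_swap (Ne.symm hqa), sm_swap (Ne.symm hqb), sm_swap (Ne.symm hqc), sm_swap hpq, sm_real, smul_assoc, map_smul, mul_smul, hadj, sm_sq, smul_neg, map_neg, neg_neg, sm_swap hab, sm_swap hac, sm_swap hbc, hab, hac, hbc, Ne.symm hab, Ne.symm hac, Ne.symm hbc]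
                try ring_nf
end CoreS

section Lin
variable {M : Type*} [AddCommGroup M] [Module ℝ M] [Module (Cl 10) M]
    [IsScalarTower ℝ (Cl 10) M] (B : M →ₗ[ℝ] M →ₗ[ℝ] ℝ)

lemma Tlev_add (a b : Fin 10) (Ψ Φ : Fin 10 → M) :
    Tlev a b (Ψ + Φ) = Tlev a b Ψ + Tlev a b Φ := by
  funext c
  simp only [Tlev, Pi.add_apply, smul_add]
  split_ifs <;> abel

lemma Tlev_zero (a b : Fin 10) : Tlev a b (0 : Fin 10 → M) = 0 := by
  funext c
  simp [Tlev]

lemma Tlev_sum (a b : Fin 10) {ι : Type*} (s : Finset ι) (f : ι → Fin 10 → M) :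
    Tlev a b (∑ i ∈ s, f i) = ∑ i ∈ s, Tlev a b (f i) := by
  induction s using Finset.cons_induction with
  | empty => simp [Tlev_zero]
  | cons i s hi ih => rw [Finset.sum_cons, Finset.sum_cons, Tlev_add, ih]

lemma Sop_add (a b c : Fin 10) (Ψ Φ : Fin 10 → M) :
    Sop a b c (Ψ + Φ) = Sop a b c Ψ + Sop a b c Φ := by
  funext d
  simp only [Sop, Pi.add_apply, smul_add]
  split_ifs <;> abel

lemma Sop_zero (a b c : Fin 10) : Sop a b c (0 : Fin 10 → M) = 0 := by
  funext d
  simp [Sop]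

lemma Sop_sum (a b c : Fin 10) {ι : Type*} (s : Finset ι) (f : ι → Fin 10 → M) :
    Sop a b c (∑ i ∈ s, f i) = ∑ i ∈ s, Sop a b c (f i) := by
  induction s using Finset.cons_induction with
  | empty => simp [Sop_zero]
  | cons i s hi ih => rw [Finset.sum_cons, Finset.sum_cons, Sop_add, ih]

lemma vsForm_add_left (Ψ₁ Ψ₂ Φ : Fin 10 → M) :
    vsForm B (Ψ₁ + Ψ₂) Φ = vsForm B Ψ₁ Φ + vsForm B Ψ₂ Φ := by
  unfold vsForm
  rw [← Finset.sum_add_distrib]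
  refine Finset.sum_congr rfl (fun a _ => ?_)
  rw [← Finset.sum_add_distrib]
  refine Finset.sum_congr rfl (fun b _ => ?_)
  split_ifs <;> simp

lemma vsForm_add_right (Ψ Φ₁ Φ₂ : Fin 10 → M) :
    vsForm B Ψ (Φ₁ + Φ₂) = vsForm B Ψ Φ₁ + vsForm B Ψ Φ₂ := by
  unfold vsForm
  rw [← Finset.sum_add_distrib]
  refine Finset.sum_congr rfl (fun a _ => ?_)
  rw [← Finset.sum_add_distrib]
  refine Finset.sum_congr rfl (fun b _ => ?_)
  split_ifs <;> simp [smul_add]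

lemma vsForm_zero_left (Φ : Fin 10 → M) : vsForm B 0 Φ = 0 := by
  unfold vsForm
  refine Finset.sum_eq_zero (fun a _ => Finset.sum_eq_zero (fun b _ => ?_))
  split_ifs <;> simp

lemma vsForm_zero_right (Ψ : Fin 10 → M) : vsForm B Ψ 0 = 0 := by
  unfold vsForm
  refine Finset.sum_eq_zero (fun a _ => Finset.sum_eq_zero (fun b _ => ?_))
  split_ifs <;> simp

lemma vsForm_sum_left {ι : Type*} (s : Finset ι) (f : ι → Fin 10 → M) (Φ : Fin 10 → M) :
    vsForm B (∑ i ∈ s, f i) Φ = ∑ i ∈ s, vsForm B (f i) Φ := by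
  induction s using Finset.cons_induction with
  | empty => simp [vsForm_zero_left]
  | cons i s hi ih => rw [Finset.sum_cons, Finset.sum_cons, vsForm_add_left, ih]

lemma vsForm_sum_right {ι : Type*} (s : Finset ι) (f : ι → Fin 10 → M) (Ψ : Fin 10 → M) :
    vsForm B Ψ (∑ i ∈ s, f i) = ∑ i ∈ s, vsForm B Ψ (f i) := by
  induction s using Finset.cons_induction with
  | empty => simp [vsForm_zero_right]
  | cons i s hi ih => rw [Finset.sum_cons, Finset.sum_cons, vsForm_add_right, ih]

end Lin

/-- for `Δ = 10`, the bilinear form `(Ψ|Φ) = Σ_{a≠b} B(Ψ_a, e_a e_b·Φ_b)` on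
vector-spinors is invariant under the `K(E₁₀)` actions `T^{ab}` and `S^{abc}`. -/
theorem stmt11 (M : Type*) [AddCommGroup M] [Module ℝ M] [Module (Cl 10) M]
    [IsScalarTower ℝ (Cl 10) M] (B : M →ₗ[ℝ] M →ₗ[ℝ] ℝ)
    (hsymm : ∀ u v : M, B u v = B v u)
    (hadj : ∀ (a : Fin 10) (u v : M), B (ee a • u) v = B u (ee a • v)) :
    (∀ (a b : Fin 10), a ≠ b → ∀ Ψ Φ : Fin 10 → M,
        vsForm B (Tlev a b Ψ) Φ + vsForm B Ψ (Tlev a b Φ) = 0) ∧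
    (∀ (a b c : Fin 10), a ≠ b → a ≠ c → b ≠ c → ∀ Ψ Φ : Fin 10 → M,
        vsForm B (Sop a b c Ψ) Φ + vsForm B Ψ (Sop a b c Φ) = 0) := by
  constructor
  · intro a b hab Ψ Φ
    rw [← Finset.univ_sum_single Ψ, ← Finset.univ_sum_single Φ, Tlev_sum, Tlev_sum,
      vsForm_sum_left, vsForm_sum_left, ← Finset.sum_add_distrib]
    refine Finset.sum_eq_zero (fun p _ => ?_)
    rw [vsForm_sum_right, vsForm_sum_right, ← Finset.sum_add_distrib]
    refine Finset.sum_eq_zero (fun q _ => ?_)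
    exact coreT hadj a b p q hab (Ψ p) (Φ q)
  · intro a b c hab hac hbc Ψ Φ
    rw [← Finset.univ_sum_single Ψ, ← Finset.univ_sum_single Φ, Sop_sum, Sop_sum,
      vsForm_sum_left, vsForm_sum_left, ← Finset.sum_add_distrib]
    refine Finset.sum_eq_zero (fun p _ => ?_)
    rw [vsForm_sum_right, vsForm_sum_right, ← Finset.sum_add_distrib]
    refine Finset.sum_eq_zero (fun q _ => ?_)
    exact coreS hadj a b c p q hab hac hbc (Ψ p) (Φ q)
end
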